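/- Suppose every matrix in ℂ^{n×n} can be approximated to arbitrary precision (in operator norm) by a product of 2n−1 alternating circulant and diagonal matrices (Huhtanen–Perämäki). Let N = f_{W_L,b_L} ∘ ... ∘ f_{W_1,b_1} be a deep ReLU network of width n and depth L, and let X ⊂ ℂⁿ be bounded. Then for any ε > 0 there exists a diagonal-circulant network N′ of width n and depth (2n−1)L (i.e., a composition of maps z ↦ φ(D C z + β) with D diagonal, C circulant, and φ either complex ReLU or identity) such that ‖N(x) − N′(x)‖ < ε for all x ∈ X. -/

import Mathlib

open scoped Matrix.Norms.L2Operator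

/-- Componentwise complex ReLU: `ReLU(z) = max(0, Re z) + i·max(0, Im z)`. -/
noncomputable def creluC {n : ℕ} (z : EuclideanSpace ℂ (Fin n)) : EuclideanSpace ℂ (Fin n) :=
  WithLp.toLp 2 (fun i => Complex.mk (max 0 (z i).re) (max 0 (z i).im))

/-- The circulant matrix `circ(c)`, whose `(p,q)` entry is `c_{(p−q) mod n}`. -/
def circMat {n : ℕ} [NeZero n] (c : Fin n → ℂ) : Matrix (Fin n) (Fin n) ℂ :=
  fun p q => c (p - q)

/-- A matrix is circulant if it is `circ(c)` for some `c`. -/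
def IsCirculant {n : ℕ} [NeZero n] (M : Matrix (Fin n) (Fin n) ℂ) : Prop :=
  ∃ c : Fin n → ℂ, M = circMat c

/-- A matrix is diagonal if it is `diagonal d` for some `d`. -/
def IsDiagonalM {n : ℕ} (M : Matrix (Fin n) (Fin n) ℂ) : Prop :=
  ∃ d : Fin n → ℂ, M = Matrix.diagonal d

/-- Alternating circulant (odd 1-based positions) / diagonal (even positions). -/
def Alternating {n m : ℕ} [NeZero n] (B : Fin m → Matrix (Fin n) (Fin n) ℂ) : Prop :=
  ∀ i : Fin m, (Even (i : ℕ) → IsCirculant (B i)) ∧ (Odd (i : ℕ) → IsDiagonalM (B i))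

/-- The deep ReLU network `f_{W_L,b_L} ∘ ⋯ ∘ f_{W_1,b_1}` (0-indexed). -/
noncomputable def reluNet {n : ℕ} (W : ℕ → Matrix (Fin n) (Fin n) ℂ)
    (b : ℕ → EuclideanSpace ℂ (Fin n)) : ℕ → EuclideanSpace ℂ (Fin n) → EuclideanSpace ℂ (Fin n)
  | 0, x => x
  | (L + 1), x => creluC (Matrix.toEuclideanLin (W L) (reluNet W b L x) + b L)

/-- A diagonal-circulant network: a composition of layers `z ↦ φ(D C z + β)` with `D`
diagonal, `C` circulant, and `φ` either the complex ReLU (`act = true`) or the identity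
(`act = false`). -/
noncomputable def dcNet {n : ℕ} [NeZero n] (D C : ℕ → Fin n → ℂ)
    (β : ℕ → EuclideanSpace ℂ (Fin n)) (act : ℕ → Bool) :
    ℕ → EuclideanSpace ℂ (Fin n) → EuclideanSpace ℂ (Fin n)
  | 0, x => x
  | (L + 1), x =>
      (if act L then creluC else id)
        (Matrix.toEuclideanLin (Matrix.diagonal (D L) * circMat (C L)) (dcNet D C β act L x)
          + β L)

/-!
Every factor of a Huhtanen–Perämäki product is circulant or diagonal, hence of the form `D C`
with `D` diagonal and `C` circulant (taking `D = 1` or `C = 1`). A block of `2n − 1`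
diagonal-circulant layers, all but the last without activation and bias, therefore computes
`x ↦ ReLU(P x + b)` for any such product `P`. Replacing each weight matrix `W` of the ReLU
network by a product `P` with `‖W − P‖` small, the error grows by at most
`‖W‖ · (previous error) + ‖W − P‖ · ‖input‖` per layer, since ReLU is 1-Lipschitz; the inputs
stay bounded because the network is Lipschitz and `X` is bounded.
-/

open Matrix

variable {n : ℕ}

lemma lipschitzWith_creluC : LipschitzWith 1 (creluC (n := n)) := by
  refine LipschitzWith.mk_one fun z w => ?_
  have relu_sq_le (a c : ℝ) : (max 0 a - max 0 c) ^ 2 ≤ (a - c) ^ 2 :=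
    sq_le_sq.2 (by simpa using abs_max_sub_max_le_max 0 a 0 c)
  rw [EuclideanSpace.dist_eq, EuclideanSpace.dist_eq]
  gcongr with i
  rw [Complex.dist_eq_re_im, Complex.dist_eq_re_im]
  exact Real.sqrt_le_sqrt <| add_le_add (relu_sq_le _ _) (relu_sq_le _ _)

noncomputable def reluLayer (A : Matrix (Fin n) (Fin n) ℂ) (b : EuclideanSpace ℂ (Fin n))
    (y : EuclideanSpace ℂ (Fin n)) : EuclideanSpace ℂ (Fin n) :=
  creluC (toEuclideanLin A y + b)

lemma dist_reluLayer_le (A P : Matrix (Fin n) (Fin n) ℂ) (b u y : EuclideanSpace ℂ (Fin n)) :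
    dist (reluLayer A b u) (reluLayer P b y) ≤ ‖A‖ * dist u y + ‖A - P‖ * ‖y‖ := by
  have hsplit : toEuclideanLin A u - toEuclideanLin P y
      = toEuclideanLin A (u - y) + toEuclideanLin (A - P) y := by
    simp only [map_sub, LinearMap.sub_apply]
    abel
  calc dist (reluLayer A b u) (reluLayer P b y)
      ≤ dist (toEuclideanLin A u + b) (toEuclideanLin P y + b) :=
        lipschitzWith_creluC.dist_le_mul_of_le le_rfl |>.trans (by simp)
    _ = ‖toEuclideanLin A (u - y) + toEuclideanLin (A - P) y‖ := by
        rw [dist_add_right, dist_eq_norm, hsplit]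
    _ ≤ ‖A‖ * ‖u - y‖ + ‖A - P‖ * ‖y‖ :=
        norm_add_le_of_le (A.l2_opNorm_mulVec _) ((A - P).l2_opNorm_mulVec _)
    _ = ‖A‖ * dist u y + ‖A - P‖ * ‖y‖ := by rw [dist_eq_norm]

lemma lipschitzWith_reluLayer (A : Matrix (Fin n) (Fin n) ℂ) (b : EuclideanSpace ℂ (Fin n)) :
    LipschitzWith ‖A‖₊ (reluLayer A b) :=
  LipschitzWith.of_dist_le_mul fun u y => by simpa using dist_reluLayer_le A A b u y

lemma exists_lipschitzWith_reluNet (W : ℕ → Matrix (Fin n) (Fin n) ℂ)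
    (b : ℕ → EuclideanSpace ℂ (Fin n)) (L : ℕ) : ∃ K, LipschitzWith K (reluNet W b L) := by
  induction L with
  | zero => exact ⟨1, LipschitzWith.id⟩
  | succ L ih =>
    obtain ⟨K, hK⟩ := ih
    exact ⟨_, (lipschitzWith_reluLayer (W L) (b L)).comp hK⟩

section DiagonalCirculant

variable [NeZero n]

def DCRealizable (m : ℕ) (f : EuclideanSpace ℂ (Fin n) → EuclideanSpace ℂ (Fin n)) : Prop :=
  ∃ D C β act, dcNet D C β act m = f

lemma dcNet_congr {D C D' C' : ℕ → Fin n → ℂ} {β β' : ℕ → EuclideanSpace ℂ (Fin n)}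
    {act act' : ℕ → Bool} {m : ℕ}
    (h : ∀ k < m, D k = D' k ∧ C k = C' k ∧ β k = β' k ∧ act k = act' k) :
    dcNet D C β act m = dcNet D' C' β' act' m := by
  induction m with
  | zero => rfl
  | succ m ih =>
    obtain ⟨hD, hC, hβ, hact⟩ := h m m.lt_succ_self
    funext x
    rw [dcNet, dcNet, hD, hC, hβ, hact, ih fun k hk => h k (hk.trans m.lt_succ_self)]

open Function in
lemma DCRealizable.comp_layer {s : ℕ} {f : EuclideanSpace ℂ (Fin n) → EuclideanSpace ℂ (Fin n)}
    (hf : DCRealizable s f) (d c : Fin n → ℂ) (β₀ : EuclideanSpace ℂ (Fin n)) (a : Bool) :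
    DCRealizable (s + 1) fun x =>
      (if a then creluC else id) (toEuclideanLin (diagonal d * circMat c) (f x) + β₀) := by
  obtain ⟨D, C, β, act, rfl⟩ := hf
  refine ⟨update D s d, update C s c, update β s β₀, update act s a, ?_⟩
  have hprefix : dcNet (update D s d) (update C s c) (update β s β₀) (update act s a) s
      = dcNet D C β act s :=
    dcNet_congr fun k hk => by simp [update_of_ne hk.ne]
  funext x
  rw [dcNet, hprefix]
  simp only [update_self]

def IsDiagCirc (M : Matrix (Fin n) (Fin n) ℂ) : Prop :=
  ∃ d c, diagonal d * circMat c = M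

lemma circMat_single_zero_one : circMat (Pi.single 0 1 : Fin n → ℂ) = 1 := by
  ext p q
  simp [circMat, one_apply, Pi.single_apply, sub_eq_zero]

lemma IsCirculant.isDiagCirc {M : Matrix (Fin n) (Fin n) ℂ} (h : IsCirculant M) :
    IsDiagCirc M := by
  obtain ⟨c, rfl⟩ := h
  exact ⟨fun _ => 1, c, by rw [diagonal_one, one_mul]⟩

lemma IsDiagonalM.isDiagCirc {M : Matrix (Fin n) (Fin n) ℂ} (h : IsDiagonalM M) :
    IsDiagCirc M := by
  obtain ⟨d, rfl⟩ := h
  exact ⟨d, Pi.single 0 1, by rw [circMat_single_zero_one, mul_one]⟩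

lemma Alternating.isDiagCirc {m : ℕ} {B : Fin m → Matrix (Fin n) (Fin n) ℂ}
    (h : Alternating B) (i : Fin m) : IsDiagCirc (B i) :=
  (Nat.even_or_odd i).elim (fun he => ((h i).1 he).isDiagCirc) fun ho => ((h i).2 ho).isDiagCirc

lemma DCRealizable.comp_linear {s : ℕ} {f : EuclideanSpace ℂ (Fin n) → EuclideanSpace ℂ (Fin n)}
    (hf : DCRealizable s f) {l : List (Matrix (Fin n) (Fin n) ℂ)} (hl : ∀ A ∈ l, IsDiagCirc A) :
    DCRealizable (s + l.length) fun x => toEuclideanLin l.prod (f x) := by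
  induction l with
  | nil => simpa using hf
  | cons A l ih =>
    obtain ⟨d, c, rfl⟩ := hl A List.mem_cons_self
    simpa [← add_assoc] using
      (ih fun B hB => hl B (List.mem_cons_of_mem _ hB)).comp_layer d c 0 false

lemma DCRealizable.comp_reluLayer {s : ℕ}
    {f : EuclideanSpace ℂ (Fin n) → EuclideanSpace ℂ (Fin n)} (hf : DCRealizable s f)
    {l : List (Matrix (Fin n) (Fin n) ℂ)} (hl : ∀ A ∈ l, IsDiagCirc A) (hne : l ≠ [])
    (β₀ : EuclideanSpace ℂ (Fin n)) :
    DCRealizable (s + l.length) (reluLayer l.prod β₀ ∘ f) := by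
  obtain ⟨A, l, rfl⟩ := List.exists_cons_of_ne_nil hne
  obtain ⟨d, c, rfl⟩ := hl A List.mem_cons_self
  simpa [← add_assoc, reluLayer, Function.comp_def] using
    (hf.comp_linear fun B hB => hl B (List.mem_cons_of_mem _ hB)).comp_layer d c β₀ true

variable {m : ℕ}

variable (n m) in
/-- The Huhtanen–Perämäki theorem asserts this for `m = 2 * n - 1`. -/
def AlternatingProductsDense : Prop :=
  ∀ (M : Matrix (Fin n) (Fin n) ℂ) (ε : ℝ), 0 < ε →
    ∃ B : Fin m → Matrix (Fin n) (Fin n) ℂ, Alternating B ∧ ‖(List.ofFn B).prod - M‖ < ε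

lemma exists_dcRealizable_comp_reluLayer_approx (hdense : AlternatingProductsDense n m)
    (hm : m ≠ 0) {s : ℕ}
    {f : EuclideanSpace ℂ (Fin n) → EuclideanSpace ℂ (Fin n)} (hf : DCRealizable s f)
    (A : Matrix (Fin n) (Fin n) ℂ) (β₀ : EuclideanSpace ℂ (Fin n)) {δ : ℝ} (hδ : 0 < δ) :
    ∃ P, ‖A - P‖ < δ ∧ DCRealizable (s + m) (reluLayer P β₀ ∘ f) := by
  obtain ⟨B, hB, hBA⟩ := hdense A δ hδ
  have hne : List.ofFn B ≠ [] := by rwa [ne_eq, List.ofFn_eq_nil_iff]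
  refine ⟨_, by rwa [norm_sub_rev], ?_⟩
  simpa using hf.comp_reluLayer (by simpa [List.forall_mem_ofFn_iff] using hB.isDiagCirc) hne β₀

lemma exists_dcRealizable_approx_reluNet (hdense : AlternatingProductsDense n m) (hm : m ≠ 0)
    (W : ℕ → Matrix (Fin n) (Fin n) ℂ)
    (b : ℕ → EuclideanSpace ℂ (Fin n)) {X : Set (EuclideanSpace ℂ (Fin n))}
    (hX : Bornology.IsBounded X) (L : ℕ) {ε : ℝ} (hε : 0 < ε) :
    ∃ g, DCRealizable (m * L) g ∧ ∀ x ∈ X, dist (reluNet W b L x) (g x) < ε := by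
  induction L generalizing ε with
  | zero => exact ⟨id, ⟨0, 0, 0, fun _ => false, rfl⟩, fun x _ => by simpa [reluNet] using hε⟩
  | succ L ih =>
    obtain ⟨K, hK⟩ := exists_lipschitzWith_reluNet W b L
    obtain ⟨R, hR⟩ := isBounded_iff_forall_norm_le.1 (hK.isBounded_image hX)
    obtain ⟨γ, hγ, hWγ⟩ := exists_pos_mul_lt (half_pos hε) ‖W L‖
    obtain ⟨g, hg, hgX⟩ := ih hγ
    obtain ⟨δ, hδ, hRδ⟩ := exists_pos_mul_lt (half_pos hε) (R + γ)
    obtain ⟨P, hP, hPg⟩ :=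
      exists_dcRealizable_comp_reluLayer_approx hdense hm hg (W L) (b L) hδ
    refine ⟨_, by rwa [Nat.mul_succ], fun x hx => ?_⟩
    have hu : ‖reluNet W b L x‖ ≤ R := hR _ (Set.mem_image_of_mem _ hx)
    have hgx : ‖g x‖ ≤ R + γ := by
      have := norm_le_norm_add_norm_sub' (g x) (reluNet W b L x)
      rw [norm_sub_rev, ← dist_eq_norm] at this
      linarith [hgX x hx]
    calc dist (reluLayer (W L) (b L) (reluNet W b L x)) (reluLayer P (b L) (g x))
        ≤ ‖W L‖ * dist (reluNet W b L x) (g x) + ‖W L - P‖ * ‖g x‖ := dist_reluLayer_le ..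
      _ ≤ ‖W L‖ * γ + δ * (R + γ) := by gcongr; exact (hgX x hx).le
      _ < ε / 2 + ε / 2 := by linarith
      _ = ε := add_halves ε

end DiagonalCirculant

/-- Assuming the Huhtanen–Perämäki approximation theorem, any deep ReLU network of
width `n` and depth `L` is approximated uniformly on any bounded set `X`, to arbitrary
precision, by a diagonal-circulant network of width `n` and depth `(2n−1)L`. -/
theorem dcnn_approximates_deep_relu_network {n : ℕ} [NeZero n]
    (huhtanen : ∀ (M : Matrix (Fin n) (Fin n) ℂ) (ε : ℝ), 0 < ε →
      ∃ B : Fin (2 * n - 1) → Matrix (Fin n) (Fin n) ℂ,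
        Alternating B ∧ ‖(List.ofFn B).prod - M‖ < ε)
    (L : ℕ) (W : ℕ → Matrix (Fin n) (Fin n) ℂ) (b : ℕ → EuclideanSpace ℂ (Fin n))
    (X : Set (EuclideanSpace ℂ (Fin n))) (hX : Bornology.IsBounded X)
    (ε : ℝ) (hε : 0 < ε) :
    ∃ (D C : ℕ → Fin n → ℂ) (β : ℕ → EuclideanSpace ℂ (Fin n)) (act : ℕ → Bool),
      ∀ x ∈ X, ‖reluNet W b L x - dcNet D C β act ((2 * n - 1) * L) x‖ < ε := by
  obtain ⟨_, ⟨D, C, β, act, rfl⟩, happrox⟩ :=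
    exists_dcRealizable_approx_reluNet huhtanen (by have := NeZero.ne n; omega) W b hX L hε
  exact ⟨D, C, β, act, fun x hx => by simpa [dist_eq_norm] using happrox x hx⟩
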